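/- arXiv:1912.05609 — 3 statements merged into one kernel-verified Lean document; each statement's English description precedes it below -/
import Mathlib

section
/- Let M be a K×K Hermitian positive definite complex matrix and D a diagonal invertible complex matrix. If A is upper unitriangular and M D A D⁻¹ is lower triangular, then A = D⁻¹ U⁻¹ D, where M = Uᴴ Λ U is the LDL decomposition of M with U upper unitriangular and Λ diagonal positive. In particular, such A is unique. -/
/-!
Conjugating `A` by the diagonal `D` gives an upper unitriangular `B = D A D⁻¹`, so `V = U B` is
upper unitriangular as well. Since `M B = (Uᴴ Λ) V` is lower triangular and `Uᴴ Λ` is an invertible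
lower triangular matrix, `V = (Uᴴ Λ)⁻¹ (M B)` is lower triangular too, hence `V = 1`, i.e.
`U⁻¹ = D A D⁻¹`.
-/

open Matrix ComplexOrder

/-- An upper unitriangular matrix: upper triangular with ones on the diagonal. -/
def UpperUnitri {K : ℕ} (A : Matrix (Fin K) (Fin K) ℂ) : Prop :=
  (∀ i j : Fin K, j < i → A i j = 0) ∧ ∀ i : Fin K, A i i = 1

namespace Matrix

variable {n R : Type*} [LinearOrder n]

theorem IsDiag.blockTriangular {m α : Type*} [Zero R] [Preorder α] {A : Matrix m m R}
    (hA : A.IsDiag) (b : m → α) : A.BlockTriangular b := by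
  intro i j h
  refine hA fun hij => ?_
  subst hij
  exact lt_irrefl _ h

theorem IsUpperTriangular.conjTranspose [AddMonoid R] [StarAddMonoid R] {A : Matrix n n R}
    (hA : A.IsUpperTriangular) : Aᴴ.IsLowerTriangular := by
  intro i j h
  rw [conjTranspose_apply, hA (show i < j from h), star_zero]

theorem IsUpperTriangular.diag_mul [Fintype n] [NonUnitalNonAssocSemiring R] {A B : Matrix n n R}
    (hA : A.IsUpperTriangular) (hB : B.IsUpperTriangular) : (A * B).diag = A.diag * B.diag := by
  ext i
  rw [diag_apply, mul_apply, Pi.mul_apply, diag_apply, diag_apply]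
  refine Finset.sum_eq_single i (fun k _ hki => ?_) (by simp)
  rcases hki.lt_or_gt with hk | hk
  · rw [hA hk, zero_mul]
  · rw [hB hk, mul_zero]

theorem eq_diagonal_diag_of_isUpperTriangular_of_isLowerTriangular [Zero R] [DecidableEq n]
    {A : Matrix n n R} (hU : A.IsUpperTriangular) (hL : A.IsLowerTriangular) :
    A = diagonal A.diag := by
  ext i j
  rcases lt_trichotomy i j with h | rfl | h
  · rw [hL h, diagonal_apply_ne _ h.ne]
  · rw [diagonal_apply_eq, diag_apply]
  · rw [hU h, diagonal_apply_ne _ h.ne']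

def IsUpperUnitriangular [Zero R] [One R] (A : Matrix n n R) : Prop :=
  A.IsUpperTriangular ∧ A.diag = 1

namespace IsUpperUnitriangular

variable [Fintype n]

theorem mul [NonAssocSemiring R] {A B : Matrix n n R} (hA : A.IsUpperUnitriangular)
    (hB : B.IsUpperUnitriangular) : (A * B).IsUpperUnitriangular :=
  ⟨hA.1.mul hB.1, by rw [hA.1.diag_mul hB.1, hA.2, hB.2, one_mul]⟩

theorem det_eq_one [DecidableEq n] [CommRing R] {A : Matrix n n R} (hA : A.IsUpperUnitriangular) :
    A.det = 1 := by
  rw [det_of_isUpperTriangular hA.1]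
  exact Finset.prod_eq_one fun i _ => congrFun hA.2 i

theorem conj [DecidableEq n] [CommRing R] {A P : Matrix n n R} (hA : A.IsUpperUnitriangular)
    (hP : P.IsUpperTriangular) [Invertible P] : (P * A * P⁻¹).IsUpperUnitriangular := by
  have hPinv : P⁻¹.IsUpperTriangular := blockTriangular_inv_of_blockTriangular hP
  have hPA : (P * A).IsUpperTriangular := hP.mul hA.1
  refine ⟨hPA.mul hPinv, ?_⟩
  rw [hPA.diag_mul hPinv, hP.diag_mul hA.1, hA.2, mul_one, ← hP.diag_mul hPinv,
    mul_inv_of_invertible, diag_one]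

omit [Fintype n] in
theorem eq_one_of_isLowerTriangular [DecidableEq n] [Zero R] [One R] {A : Matrix n n R}
    (hA : A.IsUpperUnitriangular) (hL : A.IsLowerTriangular) : A = 1 := by
  rw [eq_diagonal_diag_of_isUpperTriangular_of_isLowerTriangular hA.1 hL, hA.2]
  rfl

theorem eq_one_of_isLowerTriangular_mul [DecidableEq n] [CommRing R] {L V : Matrix n n R}
    (hV : V.IsUpperUnitriangular) (hL : L.IsLowerTriangular) [Invertible L]
    (hLV : (L * V).IsLowerTriangular) : V = 1 := by
  refine hV.eq_one_of_isLowerTriangular ?_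
  rw [← inv_mul_cancel_left_of_invertible L V]
  exact (blockTriangular_inv_of_blockTriangular hL).mul hLV

end IsUpperUnitriangular

end Matrix

theorem upperUnitri_iff_isUpperUnitriangular {K : ℕ} {A : Matrix (Fin K) (Fin K) ℂ} :
    UpperUnitri A ↔ A.IsUpperUnitriangular :=
  ⟨fun h => ⟨fun i j hij => h.1 i j hij, funext h.2⟩,
    fun h => ⟨fun _ _ hij => h.1 hij, congrFun h.2⟩⟩

theorem stmt_3_general {K : ℕ} (M U Λ D A : Matrix (Fin K) (Fin K) ℂ)
    (hU : UpperUnitri U) (hΛ : Λ.IsDiag)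
    (hpos : ∀ i : Fin K, ∃ r : ℝ, 0 < r ∧ Λ i i = (r : ℂ))
    (hdec : M = Uᴴ * Λ * U)
    (hD : D.IsDiag) (hDinv : IsUnit D)
    (hA : UpperUnitri A)
    (hlow : ∀ i j : Fin K, i < j → (M * D * A * D⁻¹) i j = 0) :
    A = D⁻¹ * U⁻¹ * D := by
  rw [upperUnitri_iff_isUpperUnitriangular] at hU hA
  have := hDinv.invertible
  have hB : (D * A * D⁻¹).IsUpperUnitriangular := hA.conj (hD.blockTriangular id)
  have hΛdet : Λ.det ≠ 0 := by
    rw [det_of_isUpperTriangular (hΛ.blockTriangular id)]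
    refine Finset.prod_ne_zero_iff.mpr fun i _ => ?_
    obtain ⟨r, hr, hri⟩ := hpos i
    exact hri ▸ Complex.ofReal_ne_zero.mpr hr.ne'
  have : Invertible (Uᴴ * Λ) := invertibleOfIsUnitDet _ <| by
    simp [det_conjTranspose, hU.det_eq_one, hΛdet]
  have hLV : (Uᴴ * Λ * (U * (D * A * D⁻¹))).IsLowerTriangular := by
    have hMlow : (M * D * A * D⁻¹).IsLowerTriangular := fun i j h => hlow i j h
    simpa only [hdec, Matrix.mul_assoc] using hMlow
  have hUB : U * (D * A * D⁻¹) = 1 :=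
    (hU.mul hB).eq_one_of_isLowerTriangular_mul
      (hU.1.conjTranspose.mul (hΛ.blockTriangular _)) hLV
  rw [inv_eq_right_inv hUB]
  simp [Matrix.mul_assoc]

/-- if A is upper unitriangular and M D A D⁻¹ is lower triangular,
then A = D⁻¹ U⁻¹ D, where M = Uᴴ Λ U is the LDL decomposition; in particular
such A is unique. -/
theorem stmt_3 {K : ℕ} (M U Λ D A : Matrix (Fin K) (Fin K) ℂ) (hM : M.PosDef)
    (hU : UpperUnitri U) (hΛ : Λ.IsDiag)
    (hpos : ∀ i : Fin K, ∃ r : ℝ, 0 < r ∧ Λ i i = (r : ℂ))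
    (hdec : M = Uᴴ * Λ * U)
    (hD : D.IsDiag) (hDinv : IsUnit D)
    (hA : UpperUnitri A)
    (hlow : ∀ i j : Fin K, i < j → (M * D * A * D⁻¹) i j = 0) :
    A = D⁻¹ * U⁻¹ * D :=
  stmt_3_general M U Λ D A hU hΛ hpos hdec hD hDinv hA hlow
end

section
/- Let M be a K×K Hermitian positive definite complex matrix. Then the minimum of f(A, D) = Tr(Aᴴ Dᴴ M D A) over all upper unitriangular complex matrices A and all diagonal complex matrices D with |det D| = 1 equals K · (det M)^{1/K}. The minimum is attained at D̃ = (det Λ)^{1/(2K)} Λ^{-1/2} and Ã = Λ^{1/2} U⁻¹ Λ^{-1/2}, where M = Uᴴ Λ U is the LDL decomposition of M. -/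
open Matrix ComplexOrder

namespace UpperUnitri

variable {K : ℕ} {A : Matrix (Fin K) (Fin K) ℂ}

lemma blockTriangular (hA : UpperUnitri A) : A.BlockTriangular id := fun _ _ h => hA.1 _ _ h

lemma det_eq_one (hA : UpperUnitri A) : A.det = 1 := by
  rw [det_of_isUpperTriangular hA.blockTriangular]
  exact Finset.prod_eq_one fun i _ => hA.2 i

lemma inv (hA : UpperUnitri A) : UpperUnitri A⁻¹ := by
  have hdet : IsUnit A.det := by simp [hA.det_eq_one]
  have := A.invertibleOfIsUnitDet hdet
  have hinv : A⁻¹.BlockTriangular id := blockTriangular_inv_of_blockTriangular hA.blockTriangular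
  refine ⟨fun i j h => hinv h, fun i => ?_⟩
  have hAAinv : (A * A⁻¹) i i = 1 := by
    rw [mul_nonsing_inv A hdet]; simp
  rwa [mul_apply, Finset.sum_eq_single i, hA.2 i, one_mul] at hAAinv
  · intro j _ hj
    rcases lt_or_gt_of_ne hj with h | h
    · rw [hA.1 i j h, zero_mul]
    · rw [hinv h, mul_zero]
  · exact fun h => absurd (Finset.mem_univ i) h

lemma diagonal_mul_mul_diagonal (hA : UpperUnitri A) {d e : Fin K → ℂ}
    (hde : ∀ i, d i * e i = 1) : UpperUnitri (diagonal d * A * diagonal e) := by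
  refine ⟨fun i j h => ?_, fun i => ?_⟩
  · simp [hA.1 i j h]
  · simp [hA.2 i, hde i]

end UpperUnitri

theorem Matrix.PosDef.card_mul_re_det_rpow_le_re_trace {𝕜 n : Type*} [RCLike 𝕜] [Fintype n]
    [DecidableEq n] {A : Matrix n n 𝕜} (hA : A.PosDef) :
    (Fintype.card n : ℝ) * RCLike.re A.det ^ ((1 : ℝ) / Fintype.card n) ≤ RCLike.re A.trace := by
  set e := hA.1.eigenvalues
  have he : ∀ i ∈ Finset.univ, 0 ≤ e i := fun i _ => (hA.eigenvalues_pos i).le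
  have hdet : RCLike.re A.det = ∏ i, e i := by
    rw [hA.1.det_eq_prod_eigenvalues, ← RCLike.ofReal_prod, RCLike.ofReal_re]
  have htr : RCLike.re A.trace = ∑ i, e i := by
    rw [hA.1.trace_eq_sum_eigenvalues, ← RCLike.ofReal_sum, RCLike.ofReal_re]
  rw [hdet, htr]
  rcases isEmpty_or_nonempty n with hn | hn
  · simp
  have hcard : (0 : ℝ) < Fintype.card n := by exact_mod_cast Fintype.card_pos
  have amgm := Real.geom_mean_le_arith_mean Finset.univ (fun _ => 1) e (fun _ _ => zero_le_one)
    (by simpa using hcard) he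
  simp only [Real.rpow_one, one_mul, Finset.sum_const, Finset.card_univ, nsmul_eq_mul,
    mul_one] at amgm
  rw [one_div, ← le_div_iff₀' hcard]
  exact amgm

lemma Matrix.det_conjTranspose_mul_mul_of_norm_det_eq_one {𝕜 n : Type*} [RCLike 𝕜] [Fintype n]
    [DecidableEq n] (A : Matrix n n 𝕜) {B : Matrix n n 𝕜} (hB : ‖B.det‖ = 1) :
    (Bᴴ * A * B).det = A.det := by
  rw [det_mul, det_mul, det_conjTranspose, mul_comm (star B.det), mul_assoc, RCLike.star_def,
    RCLike.conj_mul, hB]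
  simp

theorem Matrix.PosDef.card_mul_re_det_rpow_le_re_trace_conjTranspose_mul_mul {𝕜 n : Type*}
    [RCLike 𝕜] [Fintype n] [DecidableEq n] {A B : Matrix n n 𝕜} (hA : A.PosDef)
    (hB : ‖B.det‖ = 1) :
    (Fintype.card n : ℝ) * RCLike.re A.det ^ ((1 : ℝ) / Fintype.card n) ≤
      RCLike.re (Bᴴ * A * B).trace := by
  have hBunit : IsUnit B.det := isUnit_iff_ne_zero.mpr (norm_ne_zero_iff.mp (by simp [hB]))
  have hconj := hA.conjTranspose_mul_mul_same
    (mulVec_injective_of_isUnit ((isUnit_iff_isUnit_det B).mpr hBunit))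
  simpa only [det_conjTranspose_mul_mul_of_norm_det_eq_one A hB] using
    hconj.card_mul_re_det_rpow_le_re_trace

lemma norm_det_diagonal_rpow_div_sqrt {K : ℕ} (hK : 0 < K) {lam : Fin K → ℝ}
    (hlam : ∀ i, 0 < lam i) :
    ‖(diagonal fun i => (((∏ j, lam j) ^ ((1 : ℝ) / (2 * K)) / √(lam i) : ℝ) : ℂ)).det‖ = 1 := by
  have hP : 0 ≤ ∏ j, lam j := Finset.prod_nonneg fun j _ => (hlam j).le
  have hpow : ((∏ j, lam j) ^ ((1 : ℝ) / (2 * K))) ^ K = √(∏ j, lam j) := by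
    rw [← Real.rpow_natCast, ← Real.rpow_mul hP, Real.sqrt_eq_rpow]
    congr 1
    field_simp
  rw [det_diagonal, ← Complex.ofReal_prod, Complex.norm_real, Finset.prod_div_distrib,
    Finset.prod_const, Finset.card_univ, Fintype.card_fin, hpow,
    ← Real.sqrt_prod _ fun j _ => (hlam j).le, div_self]
  · simp
  · exact (Real.sqrt_pos.mpr (Finset.prod_pos fun j _ => hlam j)).ne'

lemma conjTranspose_mul_ldl_mul_eq_sq_smul_one {n : Type*} [Fintype n] [DecidableEq n]
    {U : Matrix n n ℂ} (hU : IsUnit U.det) {lam : n → ℝ} (hlam : ∀ i, 0 < lam i) (c : ℝ) :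
    (diagonal (fun i => ((√(lam i) : ℝ) : ℂ)) * U⁻¹ *
        diagonal fun i => (((√(lam i))⁻¹ : ℝ) : ℂ))ᴴ *
      (diagonal fun i => ((c / √(lam i) : ℝ) : ℂ))ᴴ *
      (Uᴴ * diagonal (fun i => ((lam i : ℝ) : ℂ)) * U) *
      (diagonal fun i => ((c / √(lam i) : ℝ) : ℂ)) *
      (diagonal (fun i => ((√(lam i) : ℝ) : ℂ)) * U⁻¹ *
        diagonal fun i => (((√(lam i))⁻¹ : ℝ) : ℂ)) =
      ((c ^ 2 : ℝ) : ℂ) • 1 := by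
  set D := diagonal fun i => ((c / √(lam i) : ℝ) : ℂ)
  set A := diagonal (fun i => ((√(lam i) : ℝ) : ℂ)) * U⁻¹ *
    diagonal fun i => (((√(lam i))⁻¹ : ℝ) : ℂ)
  have hs : ∀ i, √(lam i) ≠ 0 := fun i => (Real.sqrt_pos.mpr (hlam i)).ne'
  have hDS : D * diagonal (fun i => ((√(lam i) : ℝ) : ℂ)) = (c : ℂ) • 1 := by
    rw [diagonal_mul_diagonal, ← diagonal_one, ← diagonal_smul]
    congr 1; funext i
    simp [div_mul_cancel₀ _ (Complex.ofReal_ne_zero.mpr (hs i))]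
  have hUDA : U * D * A = D := by
    calc U * D * A = (c : ℂ) • (U * U⁻¹) * diagonal fun i => (((√(lam i))⁻¹ : ℝ) : ℂ) := by
          simp only [A, ← Matrix.mul_assoc]
          rw [Matrix.mul_assoc U, hDS, Matrix.mul_smul, Matrix.mul_one, Matrix.smul_mul,
            Matrix.smul_mul]
      _ = D := by
          rw [mul_nonsing_inv U hU, smul_mul, Matrix.one_mul, ← diagonal_smul]
          congr 1; funext i
          simp [div_eq_mul_inv]
  calc Aᴴ * Dᴴ * (Uᴴ * diagonal (fun i => ((lam i : ℝ) : ℂ)) * U) * D * A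
      = (U * D * A)ᴴ * diagonal (fun i => ((lam i : ℝ) : ℂ)) * (U * D * A) := by
        simp only [conjTranspose_mul, Matrix.mul_assoc]
    _ = ((c ^ 2 : ℝ) : ℂ) • 1 := by
        rw [hUDA, diagonal_conjTranspose, diagonal_mul_diagonal, diagonal_mul_diagonal,
          ← diagonal_one, ← diagonal_smul]
        congr 1; funext i
        have hsq : ((√(lam i) : ℝ) : ℂ) ^ 2 = lam i := by
          rw [← Complex.ofReal_pow, Real.sq_sqrt (hlam i).le]
        have hs' : ((√(lam i) : ℝ) : ℂ) ≠ 0 := Complex.ofReal_ne_zero.mpr (hs i)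
        simp only [Pi.star_apply, Complex.star_def, Complex.conj_ofReal, Pi.smul_apply,
          smul_eq_mul, mul_one]
        push_cast
        rw [← hsq]
        field_simp

/-- the minimum of Tr(Aᴴ Dᴴ M D A) over upper unitriangular A and
diagonal D with |det D| = 1 equals K (det M)^{1/K}, attained at
D̃ = (det Λ)^{1/(2K)} Λ^{-1/2} and Ã = Λ^{1/2} U⁻¹ Λ^{-1/2}. -/
theorem stmt_6 {K : ℕ} (hK : 0 < K) (M U Λ : Matrix (Fin K) (Fin K) ℂ)
    (lam : Fin K → ℝ) (hM : M.PosDef)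
    (hU : UpperUnitri U) (hΛ : Λ = Matrix.diagonal fun i => ((lam i : ℝ) : ℂ))
    (hlam : ∀ i : Fin K, 0 < lam i)
    (hdec : M = Uᴴ * Λ * U)
    (Dt At : Matrix (Fin K) (Fin K) ℂ)
    (hDt : Dt = Matrix.diagonal fun i =>
      (((∏ j : Fin K, lam j) ^ ((1 : ℝ) / (2 * K)) / Real.sqrt (lam i) : ℝ) : ℂ))
    (hAt : At = (Matrix.diagonal fun i => ((Real.sqrt (lam i) : ℝ) : ℂ)) * U⁻¹ *
      (Matrix.diagonal fun i => (((Real.sqrt (lam i))⁻¹ : ℝ) : ℂ))) :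
    UpperUnitri At ∧ Dt.IsDiag ∧ ‖Dt.det‖ = 1 ∧
    (Atᴴ * Dtᴴ * M * Dt * At).trace = (((K : ℝ) * M.det.re ^ ((1 : ℝ) / K) : ℝ) : ℂ) ∧
    ∀ A D : Matrix (Fin K) (Fin K) ℂ,
      UpperUnitri A → D.IsDiag → ‖D.det‖ = 1 →
      (K : ℝ) * M.det.re ^ ((1 : ℝ) / K) ≤ (Aᴴ * Dᴴ * M * D * A).trace.re := by
  subst hΛ hDt hAt
  have hMdet : M.det.re = ∏ j, lam j := by
    rw [hdec, det_conjTranspose_mul_mul_of_norm_det_eq_one _ (by simp [hU.det_eq_one]),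
      det_diagonal, ← Complex.ofReal_prod, Complex.ofReal_re]
  refine ⟨hU.inv.diagonal_mul_mul_diagonal fun i => ?_, isDiag_diagonal _,
    norm_det_diagonal_rpow_div_sqrt hK hlam, ?_, fun A D hA _ hD => ?_⟩
  · rw [← Complex.ofReal_mul, mul_inv_cancel₀ (Real.sqrt_pos.mpr (hlam i)).ne',
      Complex.ofReal_one]
  · have hsq : ((∏ j, lam j) ^ ((1 : ℝ) / (2 * K))) ^ 2 = (∏ j, lam j) ^ ((1 : ℝ) / K) := by
      rw [← Real.rpow_natCast, ← Real.rpow_mul (Finset.prod_nonneg fun j _ => (hlam j).le)]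
      ring_nf
    rw [hMdet, hdec, conjTranspose_mul_ldl_mul_eq_sq_smul_one (by simp [hU.det_eq_one]) hlam,
      trace_smul, trace_one, hsq, Fintype.card_fin, smul_eq_mul, mul_comm]
    norm_cast
  · have hDA : ‖(D * A).det‖ = 1 := by rw [det_mul, hA.det_eq_one, mul_one, hD]
    have := hM.card_mul_re_det_rpow_le_re_trace_conjTranspose_mul_mul hDA
    simp only [Fintype.card_fin, RCLike.re_to_complex, conjTranspose_mul] at this
    simpa only [Matrix.mul_assoc] using this
end

section
/- Let M be a K×K Hermitian positive definite complex matrix. Among all diagonal complex matrices D with |det D| = 1, the minimum over upper-unitriangular complex A of Tr(Aᴴ Dᴴ M D A) is achieved only at D with |dᵢ|² = (det Λ)^{1/K} / λᵢ for all i; i.e., the minimizing D is unique up to multiplying each diagonal entry by a unit-modulus complex number, where M = Uᴴ Λ U is the LDL decomposition with Λ = diag(λ₁,…,λ_K). -/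
open Matrix ComplexOrder

/-- the minimizing diagonal D (with |det D| = 1) of
min over upper unitriangular A of Tr(Aᴴ Dᴴ M D A) must satisfy
|dᵢ|² = (det Λ)^{1/K} / λᵢ for all i. -/
theorem stmt_16 {K : ℕ} (hK : 0 < K) (M U Λ : Matrix (Fin K) (Fin K) ℂ)
    (lam : Fin K → ℝ) (hM : M.PosDef)
    (hU : UpperUnitri U) (hΛ : Λ = Matrix.diagonal fun i => ((lam i : ℝ) : ℂ))
    (hlam : ∀ i : Fin K, 0 < lam i)
    (hdec : M = Uᴴ * Λ * U)
    (D : Matrix (Fin K) (Fin K) ℂ) (hD : D.IsDiag)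
    (hdet : ‖D.det‖ = 1)
    (hmin : ∃ A : Matrix (Fin K) (Fin K) ℂ, UpperUnitri A ∧
      (Aᴴ * Dᴴ * M * D * A).trace.re ≤
        (K : ℝ) * (∏ j : Fin K, lam j) ^ ((1 : ℝ) / K)) :
    ∀ i : Fin K, ‖D i i‖ ^ 2 = (∏ j : Fin K, lam j) ^ ((1 : ℝ) / K) / lam i := by
  obtain ⟨A, hA, hmin⟩ := hmin
  have hDdiag : Matrix.diagonal D.diag = D := hD.diagonal_diag
  set d : Fin K → ℂ := D.diag with hddef
  -- product of norms of diagonal entries is 1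
  have hdet' : ∏ i, ‖d i‖ = 1 := by
    have h1 : D.det = ∏ i, d i := by
      conv_lhs => rw [← hDdiag]
      rw [Matrix.det_diagonal]
    have : ‖D.det‖ = 1 := hdet
    rw [h1, norm_prod] at this
    exact this
  have hdne : ∀ i, ‖d i‖ ≠ 0 := by
    intro i h
    rw [Finset.prod_eq_zero (Finset.mem_univ i) h] at hdet'
    exact one_ne_zero hdet'.symm
  set t : Fin K → ℝ := fun i => lam i * ‖d i‖ ^ 2 with htdef
  have ht_pos : ∀ i, 0 < t i := fun i =>
    mul_pos (hlam i) (pow_pos (lt_of_le_of_ne (norm_nonneg _) (Ne.symm (hdne i))) 2)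
  set G : ℝ := (∏ j, lam j) ^ ((1 : ℝ) / K) with hGdef
  have hprodt : ∏ i, t i = ∏ j, lam j := by
    rw [htdef, Finset.prod_mul_distrib, Finset.prod_pow, hdet', one_pow, mul_one]
  -- trace lower bound
  set B : Matrix (Fin K) (Fin K) ℂ := U * D * A with hBdef
  have hform : Aᴴ * Dᴴ * M * D * A = Bᴴ * Λ * B := by
    rw [hdec, hBdef]
    simp only [Matrix.conjTranspose_mul, Matrix.mul_assoc]
  have hBii : ∀ i, B i i = d i := by
    intro i
    have hDA : ∀ k, (D * A) k i = d k * A k i := by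
      intro k
      conv_lhs => rw [← hDdiag]
      rw [Matrix.diagonal_mul]
    rw [hBdef, Matrix.mul_assoc, Matrix.mul_apply]
    rw [Finset.sum_eq_single i]
    · rw [hDA, hA.2, hU.2, one_mul, mul_one]
    · intro k _ hk
      rcases lt_or_gt_of_ne hk with h | h
      · rw [hU.1 i k h, zero_mul]
      · rw [hDA, hA.1 k i h, mul_zero, mul_zero]
    · intro h; exact absurd (Finset.mem_univ i) h
  have htr : (Bᴴ * Λ * B).trace.re = ∑ j, ∑ i, lam i * ‖B i j‖ ^ 2 := by
    rw [Matrix.trace, hΛ, Complex.re_sum]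
    refine Finset.sum_congr rfl fun j _ => ?_
    rw [Matrix.diag_apply, Matrix.mul_assoc, Matrix.mul_apply, Complex.re_sum]
    refine Finset.sum_congr rfl fun i _ => ?_
    rw [Matrix.diagonal_mul, Matrix.conjTranspose_apply, Complex.star_def]
    have h2 : ((‖B i j‖ : ℂ)) ^ 2 = (starRingEnd ℂ) (B i j) * B i j := by
      rw [← Complex.normSq_eq_conj_mul_self]
      norm_cast
      rw [Complex.sq_norm]
    have : (starRingEnd ℂ) (B i j) * ((lam i : ℂ) * B i j)
        = ((lam i * ‖B i j‖ ^ 2 : ℝ) : ℂ) := by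
      push_cast
      rw [h2]; ring
    rw [this, Complex.ofReal_re]
  have hsum : ∑ i, t i ≤ (Bᴴ * Λ * B).trace.re := by
    rw [htr]
    have h1 : ∑ i, t i = ∑ i, lam i * ‖B i i‖ ^ 2 := by
      refine Finset.sum_congr rfl fun i _ => ?_
      rw [hBii]
    rw [h1]
    refine Finset.sum_le_sum fun j _ => ?_
    exact Finset.single_le_sum (f := fun i => lam i * ‖B i j‖ ^ 2)
      (fun i _ => mul_nonneg (hlam i).le (pow_nonneg (norm_nonneg _) 2)) (Finset.mem_univ j)
  have hchain : ∑ i, t i ≤ (K : ℝ) * G := by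
    calc ∑ i, t i ≤ (Bᴴ * Λ * B).trace.re := hsum
      _ = (Aᴴ * Dᴴ * M * D * A).trace.re := by rw [hform]
      _ ≤ (K : ℝ) * G := hmin
  -- AM-GM equality case via strict convexity of exp
  have hKpos : (0 : ℝ) < K := Nat.cast_pos.mpr hK
  have hKne : (K : ℝ) ≠ 0 := ne_of_gt hKpos
  have hGeq : Real.exp (∑ i, (1 / (K : ℝ)) • Real.log (t i)) = G := by
    have hlog : ∑ i, (1 / (K : ℝ)) • Real.log (t i)
        = Real.log (∏ i, t i) * (1 / K) := by
      rw [Real.log_prod (fun i _ => ne_of_gt (ht_pos i)), Finset.sum_mul]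
      refine Finset.sum_congr rfl fun i _ => ?_
      rw [smul_eq_mul, mul_comm]
    rw [hlog, ← Real.rpow_def_of_pos (Finset.prod_pos fun i _ => ht_pos i),
      hprodt, hGdef]
  have hle : ∑ i, (1 / (K : ℝ)) • Real.exp (Real.log (t i))
      ≤ Real.exp (∑ i, (1 / (K : ℝ)) • Real.log (t i)) := by
    rw [hGeq]
    have : ∑ i, (1 / (K : ℝ)) • Real.exp (Real.log (t i))
        = (1 / K) * ∑ i, t i := by
      rw [Finset.mul_sum]
      refine Finset.sum_congr rfl fun i _ => ?_
      rw [Real.exp_log (ht_pos i), smul_eq_mul]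
    rw [this]
    calc (1 / (K : ℝ)) * ∑ i, t i ≤ (1 / K) * ((K : ℝ) * G) := by
          apply mul_le_mul_of_nonneg_left hchain (by positivity)
      _ = G := by field_simp
  have key := strictConvexOn_exp.eq_of_le_map_sum
    (t := Finset.univ) (w := fun _ : Fin K => 1 / (K : ℝ))
    (p := fun i => Real.log (t i))
    (fun i _ => div_pos one_pos hKpos)
    (by rw [Finset.sum_const, Finset.card_univ, Fintype.card_fin, nsmul_eq_mul]; field_simp)
    (fun i _ => Set.mem_univ _) hle
  intro i
  have hteq : ∀ j, t j = t i := by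
    intro j
    have := key (Finset.mem_univ j) (Finset.mem_univ i)
    have := congrArg Real.exp this
    rwa [Real.exp_log (ht_pos j), Real.exp_log (ht_pos i)] at this
  have hti : t i = G := by
    have hp : ∏ j, t j = t i ^ K := by
      rw [Finset.prod_congr rfl fun j _ => hteq j, Finset.prod_const,
        Finset.card_univ, Fintype.card_fin]
    have : G = (t i ^ K) ^ ((1 : ℝ) / K) := by rw [hGdef, ← hprodt, hp]
    rw [this, ← Real.rpow_natCast (t i) K,
      ← Real.rpow_mul (le_of_lt (ht_pos i)), mul_one_div, div_self hKne,
      Real.rpow_one]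
  have : lam i * ‖d i‖ ^ 2 = G := hti
  have hd2 : ‖d i‖ ^ 2 = G / lam i := by
    rw [eq_div_iff (ne_of_gt (hlam i)), mul_comm]
    exact this
  exact hd2
end
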